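/- arXiv:1701.07984 — 4 statements merged into one kernel-verified Lean document; each statement's English description precedes it below -/
import Mathlib

section
/- Let H be a real separable Hilbert space, (Ω, 𝓕, ℙ) a probability space, η > 0, and for each t ≥ 0, y ∈ H let Y_t(y) : Ω → H be a strongly measurable, square-Bochner-integrable random variable with 𝔼‖Y_t(y) − Y_t(y′)‖² ≤ e^{−ηt} ‖y − y′‖² for all t ≥ 0 and y, y′ ∈ H. Let μ be a Borel probability measure on H with M² := ∫_H ‖z‖² dμ(z) < ∞. Let F : H × H → H satisfy ‖F(u₁, v₁) − F(u₂, v₂)‖ ≤ L_F (‖u₁ − u₂‖ + ‖v₁ − v₂‖) for all arguments, and suppose μ is invariant in the sense that for every x ∈ H and t ≥ 0 the map z ↦ 𝔼[F(x, Y_t(z))] is Bochner integrable with respect to μ and ∫_H 𝔼[F(x, Y_t(z))] dμ(z) = ∫_H F(x, z) dμ(z). Then for every x, y ∈ H and t ≥ 0, ‖F̄(x) − 𝔼[F(x, Y_t(y))]‖² ≤ 2 L_F² e^{−ηt} (M² + ‖y‖²). -/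
open MeasureTheory

lemma sq_int_le_aux {α : Type*} [MeasurableSpace α] {ν : Measure α} [IsProbabilityMeasure ν]
    {f : α → ℝ} (hf : MemLp f 2 ν) : (∫ a, f a ∂ν) ^ 2 ≤ ∫ a, f a ^ 2 ∂ν := by
  have h := ProbabilityTheory.variance_nonneg f ν
  rw [ProbabilityTheory.variance_eq_sub hf] at h
  simpa using sub_nonneg.mp h

lemma int_le_sqrt_aux {α : Type*} [MeasurableSpace α] {ν : Measure α} [IsProbabilityMeasure ν]
    {f : α → ℝ} {B : ℝ} (hf : MemLp f 2 ν) (hB : ∫ a, f a ^ 2 ∂ν ≤ B) :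
    ∫ a, f a ∂ν ≤ Real.sqrt B :=
  Real.le_sqrt_of_sq_le ((sq_int_le_aux hf).trans hB)

/-- Exponential convergence of the expectation of the frozen drift
to the averaged drift: `‖F̄(x) − 𝔼[F(x, Y_t(y))]‖² ≤ 2 L_F² e^{−ηt} (M² + ‖y‖²)`. -/
theorem averaging_expectation_bound
    {H : Type*} [NormedAddCommGroup H] [InnerProductSpace ℝ H] [CompleteSpace H]
    [SecondCountableTopology H] [MeasurableSpace H] [BorelSpace H]
    {Ω : Type*} [MeasurableSpace Ω] (P : Measure Ω) [IsProbabilityMeasure P]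
    (η : ℝ) (hη : 0 < η)
    (Y : ℝ → H → Ω → H)
    (hYmeas : ∀ t, 0 ≤ t → ∀ y, AEStronglyMeasurable (Y t y) P)
    (hYL2 : ∀ t, 0 ≤ t → ∀ y, MemLp (Y t y) 2 P)
    (hmix : ∀ t, 0 ≤ t → ∀ y y' : H,
      ∫ ω, ‖Y t y ω - Y t y' ω‖ ^ 2 ∂P ≤ Real.exp (-η * t) * ‖y - y'‖ ^ 2)
    (μ : Measure H) [IsProbabilityMeasure μ]
    (hM2 : Integrable (fun z : H => ‖z‖ ^ 2) μ)
    (F : H → H → H) (LF : ℝ) (hLF : 0 < LF)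
    (hFlip : ∀ u₁ u₂ v₁ v₂ : H, ‖F u₁ v₁ - F u₂ v₂‖ ≤ LF * (‖u₁ - u₂‖ + ‖v₁ - v₂‖))
    (hFY : ∀ x z : H, ∀ t, 0 ≤ t → Integrable (fun ω => F x (Y t z ω)) P)
    (hinv : ∀ x : H, ∀ t, 0 ≤ t →
      Integrable (fun z => ∫ ω, F x (Y t z ω) ∂P) μ ∧
        ∫ z, (∫ ω, F x (Y t z ω) ∂P) ∂μ = ∫ z, F x z ∂μ)
    (x y : H) (t : ℝ) (ht : 0 ≤ t) :
    ‖(∫ z, F x z ∂μ) - ∫ ω, F x (Y t y ω) ∂P‖ ^ 2 ≤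
      2 * LF ^ 2 * Real.exp (-η * t) * ((∫ z, ‖z‖ ^ 2 ∂μ) + ‖y‖ ^ 2) := by
  set c := Real.exp (-η * t) with hc
  have hc0 : 0 ≤ c := Real.exp_nonneg _
  set s := Real.sqrt c with hs
  have hs0 : 0 ≤ s := Real.sqrt_nonneg _
  have hs2 : s ^ 2 = c := Real.sq_sqrt hc0
  -- membership of z ↦ ‖z - y‖ in L² μ
  have hidL2 : MemLp (fun z : H => z) 2 μ :=
    (memLp_two_iff_integrable_sq_norm aestronglyMeasurable_id).2 hM2
  have hW : MemLp (fun z : H => ‖z - y‖) 2 μ := (hidL2.sub (memLp_const y)).norm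
  -- pointwise bound in z
  have hpt : ∀ z : H,
      ‖(∫ ω, F x (Y t z ω) ∂P) - ∫ ω, F x (Y t y ω) ∂P‖ ≤ LF * (s * ‖z - y‖) := by
    intro z
    have hd : MemLp (fun ω => ‖Y t z ω - Y t y ω‖) 2 P :=
      ((hYL2 t ht z).sub (hYL2 t ht y)).norm
    have h1 : (∫ ω, F x (Y t z ω) ∂P) - ∫ ω, F x (Y t y ω) ∂P
        = ∫ ω, (F x (Y t z ω) - F x (Y t y ω)) ∂P :=
      (integral_sub (hFY x z t ht) (hFY x y t ht)).symm
    rw [h1]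
    calc ‖∫ ω, (F x (Y t z ω) - F x (Y t y ω)) ∂P‖
        ≤ ∫ ω, ‖F x (Y t z ω) - F x (Y t y ω)‖ ∂P := norm_integral_le_integral_norm _
      _ ≤ ∫ ω, LF * ‖Y t z ω - Y t y ω‖ ∂P := by
          refine integral_mono_of_nonneg (Filter.Eventually.of_forall fun ω => norm_nonneg _)
            ((hd.integrable one_le_two).const_mul LF)
            (Filter.Eventually.of_forall fun ω => ?_)
          simpa using hFlip x x (Y t z ω) (Y t y ω)
      _ = LF * ∫ ω, ‖Y t z ω - Y t y ω‖ ∂P := integral_const_mul _ _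
      _ ≤ LF * (s * ‖z - y‖) := by
          refine mul_le_mul_of_nonneg_left ?_ hLF.le
          have := int_le_sqrt_aux hd (hmix t ht z y)
          rwa [Real.sqrt_mul hc0, Real.sqrt_sq (norm_nonneg _)] at this
  -- rewrite the averaged drift using invariance
  obtain ⟨hIint, hIeq⟩ := hinv x t ht
  have h2 : (∫ z, F x z ∂μ) - ∫ ω, F x (Y t y ω) ∂P
      = ∫ z, ((∫ ω, F x (Y t z ω) ∂P) - ∫ ω, F x (Y t y ω) ∂P) ∂μ := by
    rw [integral_sub hIint (integrable_const _), hIeq, integral_const]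
    simp
  have hI : MemLp (fun z : H => LF * (s * ‖z - y‖)) 2 μ := (hW.const_mul s).const_mul LF
  have hA : ‖(∫ z, F x z ∂μ) - ∫ ω, F x (Y t y ω) ∂P‖
      ≤ LF * s * ∫ z, ‖z - y‖ ∂μ := by
    rw [h2]
    calc ‖∫ z, ((∫ ω, F x (Y t z ω) ∂P) - ∫ ω, F x (Y t y ω) ∂P) ∂μ‖
        ≤ ∫ z, ‖(∫ ω, F x (Y t z ω) ∂P) - ∫ ω, F x (Y t y ω) ∂P‖ ∂μ :=
          norm_integral_le_integral_norm _
      _ ≤ ∫ z, LF * (s * ‖z - y‖) ∂μ :=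
          integral_mono_of_nonneg (Filter.Eventually.of_forall fun z => norm_nonneg _)
            (hI.integrable one_le_two) (Filter.Eventually.of_forall hpt)
      _ = LF * s * ∫ z, ‖z - y‖ ∂μ := by
          rw [integral_const_mul, integral_const_mul]; ring
  -- square the inequality
  have hInn : 0 ≤ ∫ z, ‖z - y‖ ∂μ := integral_nonneg fun z => norm_nonneg _
  have hsq : ‖(∫ z, F x z ∂μ) - ∫ ω, F x (Y t y ω) ∂P‖ ^ 2
      ≤ (LF * s) ^ 2 * (∫ z, ‖z - y‖ ∂μ) ^ 2 := by
    have := pow_le_pow_left₀ (norm_nonneg _) hA 2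
    calc ‖(∫ z, F x z ∂μ) - ∫ ω, F x (Y t y ω) ∂P‖ ^ 2
        ≤ (LF * s * ∫ z, ‖z - y‖ ∂μ) ^ 2 := this
      _ = (LF * s) ^ 2 * (∫ z, ‖z - y‖ ∂μ) ^ 2 := by ring
  have hCS : (∫ z, ‖z - y‖ ∂μ) ^ 2 ≤ ∫ z, ‖z - y‖ ^ 2 ∂μ := sq_int_le_aux hW
  have hfin : ∫ z, ‖z - y‖ ^ 2 ∂μ ≤ 2 * ((∫ z, ‖z‖ ^ 2 ∂μ) + ‖y‖ ^ 2) := by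
    have hbd : ∀ z : H, ‖z - y‖ ^ 2 ≤ 2 * (‖z‖ ^ 2 + ‖y‖ ^ 2) := by
      intro z
      have h := pow_le_pow_left₀ (norm_nonneg (z - y)) (norm_sub_le z y) 2
      nlinarith [sq_nonneg (‖z‖ - ‖y‖)]
    calc ∫ z, ‖z - y‖ ^ 2 ∂μ ≤ ∫ z, 2 * (‖z‖ ^ 2 + ‖y‖ ^ 2) ∂μ :=
          integral_mono hW.integrable_sq ((hM2.add (integrable_const _)).const_mul 2) hbd
      _ = 2 * ((∫ z, ‖z‖ ^ 2 ∂μ) + ‖y‖ ^ 2) := by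
          rw [integral_const_mul, integral_add hM2 (integrable_const _), integral_const]
          simp
  have hLFs : (LF * s) ^ 2 = LF ^ 2 * c := by rw [mul_pow, hs2]
  calc ‖(∫ z, F x z ∂μ) - ∫ ω, F x (Y t y ω) ∂P‖ ^ 2
      ≤ (LF * s) ^ 2 * (∫ z, ‖z - y‖ ∂μ) ^ 2 := hsq
    _ ≤ (LF * s) ^ 2 * ∫ z, ‖z - y‖ ^ 2 ∂μ :=
        mul_le_mul_of_nonneg_left hCS (sq_nonneg _)
    _ ≤ (LF * s) ^ 2 * (2 * ((∫ z, ‖z‖ ^ 2 ∂μ) + ‖y‖ ^ 2)) :=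
        mul_le_mul_of_nonneg_left hfin (sq_nonneg _)
    _ = 2 * LF ^ 2 * c * ((∫ z, ‖z‖ ^ 2 ∂μ) + ‖y‖ ^ 2) := by rw [hLFs]; ring
end

section
/- Let H be a real separable Hilbert space, (Ω, 𝓕, ℙ) a probability space, η > 0, and for each t ≥ 0, y ∈ H let Y_t(y) : Ω → H be a strongly measurable, square-Bochner-integrable random variable with 𝔼‖Y_t(y) − Y_t(y′)‖² ≤ e^{−ηt} ‖y − y′‖² for all t ≥ 0 and y, y′ ∈ H. Let μ be a Borel probability measure on H with M₁ := ∫_H ‖z‖ dμ(z) < ∞. Let φ : H → ℝ be Lipschitz with constant K, μ-integrable, and suppose that for every t ≥ 0 the map z ↦ 𝔼[φ(Y_t(z))] is μ-integrable and ∫_H 𝔼[φ(Y_t(z))] dμ(z) = ∫_H φ dμ. Then for every y ∈ H and t ≥ 0, |𝔼[φ(Y_t(y))] − ∫_H φ dμ| ≤ K e^{−ηt/2} (M₁ + ‖y‖). In particular 𝔼[φ(Y_t(y))] → ∫_H φ dμ as t → ∞. -/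
open MeasureTheory Filter Topology

lemma integral_norm_le_sqrt_integral_sq
    {Ω : Type*} [MeasurableSpace Ω] (P : Measure Ω) [IsProbabilityMeasure P]
    {H : Type*} [NormedAddCommGroup H] (f : Ω → H) (hf : MemLp f 2 P) :
    ∫ ω, ‖f ω‖ ∂P ≤ (∫ ω, ‖f ω‖ ^ 2 ∂P) ^ (1/2 : ℝ) := by
  have hpq : Real.HolderConjugate 2 2 := Real.HolderConjugate.two_two
  have h := integral_mul_le_Lp_mul_Lq_of_nonneg (μ := P) hpq
    (f := fun ω => ‖f ω‖) (g := fun _ => (1:ℝ))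
    (Filter.Eventually.of_forall fun ω => norm_nonneg _)
    (Filter.Eventually.of_forall fun _ => zero_le_one)
    (by simpa using hf.norm) (by simpa using memLp_const (1:ℝ))
  have h2 : ∀ ω, ‖f ω‖ ^ (2:ℝ) = ‖f ω‖ ^ (2:ℕ) := fun ω => by
    rw [← Real.rpow_natCast]; norm_num
  simp only [mul_one, Real.one_rpow, integral_const, measure_univ, ENNReal.toReal_one,
    one_smul, h2] at h
  simpa using h

/-- Exponential mixing of the fast process: for Lipschitz `φ`,
`|𝔼[φ(Y_t(y))] − ∫ φ dμ| ≤ K e^{−ηt/2}(M₁ + ‖y‖)`, and in particular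
`𝔼[φ(Y_t(y))] → ∫ φ dμ` as `t → ∞`. -/
theorem mixing_of_fast_process
    {H : Type*} [NormedAddCommGroup H] [InnerProductSpace ℝ H] [CompleteSpace H]
    [SecondCountableTopology H] [MeasurableSpace H] [BorelSpace H]
    {Ω : Type*} [MeasurableSpace Ω] (P : Measure Ω) [IsProbabilityMeasure P]
    (η : ℝ) (hη : 0 < η)
    (Y : ℝ → H → Ω → H)
    (hYmeas : ∀ t, 0 ≤ t → ∀ y, AEStronglyMeasurable (Y t y) P)
    (hYL2 : ∀ t, 0 ≤ t → ∀ y, MemLp (Y t y) 2 P)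
    (hmix : ∀ t, 0 ≤ t → ∀ y y' : H,
      ∫ ω, ‖Y t y ω - Y t y' ω‖ ^ 2 ∂P ≤ Real.exp (-η * t) * ‖y - y'‖ ^ 2)
    (μ : Measure H) [IsProbabilityMeasure μ]
    (hM1 : Integrable (fun z : H => ‖z‖) μ)
    (φ : H → ℝ) (K : ℝ)
    (hφlip : ∀ a b : H, |φ a - φ b| ≤ K * ‖a - b‖)
    (hφint : Integrable φ μ)
    (hφY : ∀ t, 0 ≤ t → ∀ z, Integrable (fun ω => φ (Y t z ω)) P)
    (hinv : ∀ t, 0 ≤ t →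
      Integrable (fun z => ∫ ω, φ (Y t z ω) ∂P) μ ∧
        ∫ z, (∫ ω, φ (Y t z ω) ∂P) ∂μ = ∫ z, φ z ∂μ)
    (y : H) :
    (∀ t, 0 ≤ t →
      |(∫ ω, φ (Y t y ω) ∂P) - ∫ z, φ z ∂μ| ≤
        K * Real.exp (-η * t / 2) * ((∫ z, ‖z‖ ∂μ) + ‖y‖)) ∧
    Tendsto (fun t : ℝ => ∫ ω, φ (Y t y ω) ∂P) atTop (𝓝 (∫ z, φ z ∂μ)) := by
  rcases subsingleton_or_nontrivial H with hH | hH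
  · -- trivial Hilbert space: everything is zero
    have hzero : ∀ t, 0 ≤ t → (∫ ω, φ (Y t y ω) ∂P) - ∫ z, φ z ∂μ = 0 := by
      intro t ht
      obtain ⟨hgint, hgeq⟩ := hinv t ht
      have : ∫ z, (∫ ω, φ (Y t z ω) ∂P) ∂μ = ∫ ω, φ (Y t y ω) ∂P := by
        have hconst : (fun z : H => ∫ ω, φ (Y t z ω) ∂P)
            = fun _ : H => ∫ ω, φ (Y t y ω) ∂P := by
          funext z; rw [Subsingleton.elim z y]
        rw [hconst, integral_const, probReal_univ, one_smul]
      rw [← hgeq, this, sub_self]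
    constructor
    · intro t ht
      rw [hzero t ht, abs_zero]
      have h1 : (∫ z, ‖z‖ ∂μ) = 0 := by
        have : (fun z : H => ‖z‖) = fun _ : H => (0:ℝ) := by
          funext z; rw [Subsingleton.elim z 0, norm_zero]
        rw [this, integral_zero]
      have h2 : ‖y‖ = 0 := by rw [Subsingleton.elim y 0, norm_zero]
      rw [h1, h2, add_zero, mul_zero]
    · refine Tendsto.congr' ?_ tendsto_const_nhds
      filter_upwards [eventually_ge_atTop (0:ℝ)] with t ht
      have := hzero t ht
      linarith
  · -- nontrivial case: K ≥ 0
    obtain ⟨a, b, hab⟩ := exists_pair_ne H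
    have hK : 0 ≤ K := by
      have h1 : (0:ℝ) ≤ K * ‖a - b‖ := le_trans (abs_nonneg _) (hφlip a b)
      have h2 : 0 < ‖a - b‖ := by
        rw [norm_pos_iff, sub_ne_zero]; exact hab
      nlinarith
    have hbound : ∀ t, 0 ≤ t →
        |(∫ ω, φ (Y t y ω) ∂P) - ∫ z, φ z ∂μ| ≤
          K * Real.exp (-η * t / 2) * ((∫ z, ‖z‖ ∂μ) + ‖y‖) := by
      intro t ht
      obtain ⟨hgint, hgeq⟩ := hinv t ht
      -- pointwise bound in z
      have hpt : ∀ z : H, |(∫ ω, φ (Y t y ω) ∂P) - ∫ ω, φ (Y t z ω) ∂P| ≤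
          K * Real.exp (-η * t / 2) * ‖y - z‖ := by
        intro z
        have hdiffL2 : MemLp (fun ω => Y t y ω - Y t z ω) 2 P :=
          (hYL2 t ht y).sub (hYL2 t ht z)
        have hdiffInt : Integrable (fun ω => ‖Y t y ω - Y t z ω‖) P :=
          (hdiffL2.integrable one_le_two).norm
        have hφdiffInt : Integrable (fun ω => φ (Y t y ω) - φ (Y t z ω)) P :=
          (hφY t ht y).sub (hφY t ht z)
        calc |(∫ ω, φ (Y t y ω) ∂P) - ∫ ω, φ (Y t z ω) ∂P|
            = |∫ ω, (φ (Y t y ω) - φ (Y t z ω)) ∂P| := by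
              rw [integral_sub (hφY t ht y) (hφY t ht z)]
          _ ≤ ∫ ω, |φ (Y t y ω) - φ (Y t z ω)| ∂P := by
              simpa [Real.norm_eq_abs] using
                norm_integral_le_integral_norm (fun ω => φ (Y t y ω) - φ (Y t z ω))
          _ ≤ ∫ ω, K * ‖Y t y ω - Y t z ω‖ ∂P := by
              refine integral_mono hφdiffInt.abs (hdiffInt.const_mul K) ?_
              intro ω; exact hφlip _ _
          _ = K * ∫ ω, ‖Y t y ω - Y t z ω‖ ∂P := integral_const_mul K _
          _ ≤ K * (∫ ω, ‖Y t y ω - Y t z ω‖ ^ 2 ∂P) ^ (1/2 : ℝ) := by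
              exact mul_le_mul_of_nonneg_left
                (integral_norm_le_sqrt_integral_sq P _ hdiffL2) hK
          _ ≤ K * (Real.exp (-η * t) * ‖y - z‖ ^ 2) ^ (1/2 : ℝ) := by
              refine mul_le_mul_of_nonneg_left ?_ hK
              refine Real.rpow_le_rpow ?_ (hmix t ht y z) (by norm_num)
              exact integral_nonneg fun ω => sq_nonneg _
          _ = K * (Real.exp (-η * t / 2) * ‖y - z‖) := by
              congr 1
              rw [Real.mul_rpow (Real.exp_nonneg _) (sq_nonneg _)]
              congr 1
              · rw [← Real.exp_mul]; ring_nf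
              · rw [← Real.rpow_natCast (‖y - z‖) 2, ← Real.rpow_mul (norm_nonneg _)]
                norm_num
          _ = K * Real.exp (-η * t / 2) * ‖y - z‖ := by ring
      have hynorm : Integrable (fun z : H => ‖y - z‖) μ := by
        refine Integrable.mono ((integrable_const ‖y‖).add hM1) ?_ ?_
        · exact (continuous_const.sub continuous_id).norm.aestronglyMeasurable
        · refine Filter.Eventually.of_forall fun z => ?_
          simp only [norm_norm]
          calc ‖y - z‖ ≤ ‖y‖ + ‖z‖ := norm_sub_le _ _
            _ ≤ ‖‖y‖ + ‖z‖‖ := le_abs_self _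
      calc |(∫ ω, φ (Y t y ω) ∂P) - ∫ z, φ z ∂μ|
          = |∫ z, ((∫ ω, φ (Y t y ω) ∂P) - ∫ ω, φ (Y t z ω) ∂P) ∂μ| := by
            rw [integral_sub (integrable_const _) hgint, integral_const, probReal_univ,
              one_smul, hgeq]
        _ ≤ ∫ z, |(∫ ω, φ (Y t y ω) ∂P) - ∫ ω, φ (Y t z ω) ∂P| ∂μ :=
            by
              simpa [Real.norm_eq_abs] using norm_integral_le_integral_norm
                (fun z => (∫ ω, φ (Y t y ω) ∂P) - ∫ ω, φ (Y t z ω) ∂P)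
        _ ≤ ∫ z, K * Real.exp (-η * t / 2) * ‖y - z‖ ∂μ := by
            refine integral_mono ((integrable_const _).sub hgint).abs
              (hynorm.const_mul _) fun z => hpt z
        _ = K * Real.exp (-η * t / 2) * ∫ z, ‖y - z‖ ∂μ := integral_const_mul _ _
        _ ≤ K * Real.exp (-η * t / 2) * ((∫ z, ‖z‖ ∂μ) + ‖y‖) := by
            refine mul_le_mul_of_nonneg_left ?_
              (mul_nonneg hK (Real.exp_nonneg _))
            calc ∫ z, ‖y - z‖ ∂μ ≤ ∫ z, (‖z‖ + ‖y‖) ∂μ := by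
                  refine integral_mono hynorm (hM1.add (integrable_const _)) fun z => ?_
                  calc ‖y - z‖ ≤ ‖y‖ + ‖z‖ := norm_sub_le _ _
                    _ = ‖z‖ + ‖y‖ := add_comm _ _
              _ = (∫ z, ‖z‖ ∂μ) + ‖y‖ := by
                  rw [integral_add hM1 (integrable_const _), integral_const, probReal_univ,
                    one_smul]
    refine ⟨hbound, ?_⟩
    have hC : Tendsto (fun t : ℝ => K * Real.exp (-η * t / 2) * ((∫ z, ‖z‖ ∂μ) + ‖y‖))
        atTop (𝓝 0) := by
      have hexp : Tendsto (fun t : ℝ => Real.exp (-η * t / 2)) atTop (𝓝 0) := by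
        apply Real.tendsto_exp_atBot.comp
        have : ∀ t : ℝ, -η * t / 2 = (-η / 2) * t := fun t => by ring
        simp only [this]
        exact tendsto_id.const_mul_atTop_of_neg (by linarith)
      have := (hexp.const_mul K).mul_const ((∫ z, ‖z‖ ∂μ) + ‖y‖)
      simpa using this
    rw [tendsto_iff_norm_sub_tendsto_zero]
    refine squeeze_zero_norm' ?_ hC
    filter_upwards [eventually_ge_atTop (0:ℝ)] with t ht
    simpa [Real.norm_eq_abs, abs_abs] using hbound t ht
end

section
/- Let H be a real separable Hilbert space, (Ω, 𝓕, ℙ) a probability space, and for each t ≥ 0, y ∈ H let Y_t(y) : Ω → H be a strongly measurable random variable such that 𝔼‖Y_t(y)‖² ≤ C (e^{−ηt} ‖y‖² + 1) for all t ≥ 0 and y ∈ H, where C, η > 0. Let μ be a Borel probability measure on H such that for every bounded continuous f : H → ℝ and every t ≥ 0 the map z ↦ 𝔼[f(Y_t(z))] is μ-integrable and ∫_H 𝔼[f(Y_t(z))] dμ(z) = ∫_H f dμ. Then the invariant measure μ has finite second moment bounded by C: ∫_H ‖y‖² dμ(y) ≤ C. -/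
open MeasureTheory Filter Topology

/-- The invariant measure of the fast process has finite second moment,
bounded by the constant `C` from the uniform energy estimate
`𝔼‖Y_t(y)‖² ≤ C (e^{−ηt}‖y‖² + 1)`. -/
theorem invariant_measure_second_moment
    {H : Type*} [NormedAddCommGroup H] [InnerProductSpace ℝ H] [CompleteSpace H]
    [SecondCountableTopology H] [MeasurableSpace H] [BorelSpace H]
    {Ω : Type*} [MeasurableSpace Ω] (P : Measure Ω) [IsProbabilityMeasure P]
    (C η : ℝ) (hC : 0 < C) (hη : 0 < η)
    (Y : ℝ → H → Ω → H)
    (hYmeas : ∀ t, 0 ≤ t → ∀ y, AEStronglyMeasurable (Y t y) P)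
    (hbound : ∀ t, 0 ≤ t → ∀ y : H,
      ∫⁻ ω, ENNReal.ofReal (‖Y t y ω‖ ^ 2) ∂P ≤
        ENNReal.ofReal (C * (Real.exp (-η * t) * ‖y‖ ^ 2 + 1)))
    (μ : Measure H) [IsProbabilityMeasure μ]
    (hinv : ∀ f : H → ℝ, Continuous f → (∃ M, ∀ x, |f x| ≤ M) → ∀ t, 0 ≤ t →
      Integrable (fun z => ∫ ω, f (Y t z ω) ∂P) μ ∧
        ∫ z, (∫ ω, f (Y t z ω) ∂P) ∂μ = ∫ z, f z ∂μ) :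
    ∫⁻ y, ENNReal.ofReal (‖y‖ ^ 2) ∂μ ≤ ENNReal.ofReal C := by
  set F : ℕ → H → ℝ := fun n y => min (‖y‖ ^ 2) n with hF
  have hFcont : ∀ n, Continuous (F n) := fun n =>
    (continuous_norm.pow 2).min continuous_const
  have hFnonneg : ∀ n y, 0 ≤ F n y := fun n y =>
    le_min (by positivity) (Nat.cast_nonneg n)
  have hFle : ∀ n y, F n y ≤ n := fun n y => min_le_right _ _
  have hFbdd : ∀ n : ℕ, ∃ M, ∀ x, |F n x| ≤ M := fun n =>
    ⟨n, fun x => abs_le.2 ⟨by linarith [hFnonneg n x], hFle n x⟩⟩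
  have hFint : ∀ n, Integrable (F n) μ := by
    intro n
    refine Integrable.mono' (integrable_const (n : ℝ)) (hFcont n).aestronglyMeasurable ?_
    filter_upwards with y
    rw [Real.norm_eq_abs, abs_of_nonneg (hFnonneg n y)]
    exact hFle n y
  have key : ∀ n : ℕ, ∫ y, F n y ∂μ ≤ C := by
    intro n
    have hinner : ∀ t, 0 ≤ t → ∀ z, ∫ ω, F n (Y t z ω) ∂P ≤
        min (C * (Real.exp (-η * t) * ‖z‖ ^ 2 + 1)) (n:ℝ) := by
      intro t ht z
      have hmeas : AEStronglyMeasurable (fun ω => F n (Y t z ω)) P :=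
        (hFcont n).comp_aestronglyMeasurable (hYmeas t ht z)
      have hintY : Integrable (fun ω => F n (Y t z ω)) P := by
        refine Integrable.mono' (integrable_const (n : ℝ)) hmeas ?_
        filter_upwards with ω
        rw [Real.norm_eq_abs, abs_of_nonneg (hFnonneg n _)]
        exact hFle n _
      refine le_min ?_ ?_
      · have h1 : ∫ ω, F n (Y t z ω) ∂P =
            (∫⁻ ω, ENNReal.ofReal (F n (Y t z ω)) ∂P).toReal :=
          integral_eq_lintegral_of_nonneg_ae
            (Filter.Eventually.of_forall fun ω => hFnonneg n _) hmeas
        rw [h1]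
        have h2 : ∫⁻ ω, ENNReal.ofReal (F n (Y t z ω)) ∂P ≤
            ENNReal.ofReal (C * (Real.exp (-η * t) * ‖z‖ ^ 2 + 1)) :=
          le_trans (lintegral_mono fun ω =>
            ENNReal.ofReal_le_ofReal (min_le_left _ _)) (hbound t ht z)
        calc (∫⁻ ω, ENNReal.ofReal (F n (Y t z ω)) ∂P).toReal
            ≤ (ENNReal.ofReal (C * (Real.exp (-η * t) * ‖z‖ ^ 2 + 1))).toReal :=
              ENNReal.toReal_mono ENNReal.ofReal_ne_top h2
          _ = C * (Real.exp (-η * t) * ‖z‖ ^ 2 + 1) :=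
              ENNReal.toReal_ofReal (by positivity)
      · calc ∫ ω, F n (Y t z ω) ∂P ≤ ∫ _ω : Ω, (n : ℝ) ∂P :=
              integral_mono hintY (integrable_const _) fun ω => hFle n _
          _ = n := by simp
    set g : ℕ → H → ℝ := fun k z => min (C * (Real.exp (-η * k) * ‖z‖ ^ 2 + 1)) (n:ℝ) with hg
    have hgcont : ∀ k, Continuous (g k) := fun k =>
      (continuous_const.mul ((continuous_const.mul (continuous_norm.pow 2)).add
        continuous_const)).min continuous_const
    have hgnonneg : ∀ k z, 0 ≤ g k z := fun k z =>
      le_min (by positivity) (Nat.cast_nonneg n)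
    have hgle : ∀ k z, g k z ≤ n := fun k z => min_le_right _ _
    have hgint : ∀ k, Integrable (g k) μ := by
      intro k
      refine Integrable.mono' (integrable_const (n : ℝ)) (hgcont k).aestronglyMeasurable ?_
      filter_upwards with z
      rw [Real.norm_eq_abs, abs_of_nonneg (hgnonneg k z)]
      exact hgle k z
    have hle : ∀ k : ℕ, ∫ y, F n y ∂μ ≤ ∫ z, g k z ∂μ := by
      intro k
      have hk : (0 : ℝ) ≤ k := Nat.cast_nonneg k
      obtain ⟨hint, heq⟩ := hinv (F n) (hFcont n) (hFbdd n) k hk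
      rw [← heq]
      exact integral_mono hint (hgint k) fun z => hinner k hk z
    have hexp : Tendsto (fun k : ℕ => Real.exp (-η * k)) atTop (𝓝 0) := by
      have h1 : Tendsto (fun k : ℕ => η * (k : ℝ)) atTop atTop :=
        Tendsto.const_mul_atTop hη tendsto_natCast_atTop_atTop
      have h2 : Tendsto (fun k : ℕ => -η * (k : ℝ)) atTop atBot := by
        simp only [neg_mul]
        exact tendsto_neg_atTop_atBot.comp h1
      exact Real.tendsto_exp_atBot.comp h2
    have hlim : Tendsto (fun k : ℕ => ∫ z, g k z ∂μ) atTop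
        (𝓝 (∫ _z : H, min C (n : ℝ) ∂μ)) := by
      refine tendsto_integral_of_dominated_convergence (fun _ => (n : ℝ))
        (fun k => (hgcont k).aestronglyMeasurable) (integrable_const _) ?_ ?_
      · intro k
        filter_upwards with z
        rw [Real.norm_eq_abs, abs_of_nonneg (hgnonneg k z)]
        exact hgle k z
      · filter_upwards with z
        have : Tendsto (fun k : ℕ => C * (Real.exp (-η * k) * ‖z‖ ^ 2 + 1)) atTop
            (𝓝 (C * (0 * ‖z‖ ^ 2 + 1))) :=
          (((hexp.mul_const (‖z‖ ^ 2)).add tendsto_const_nhds).const_mul C)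
        have h2 := this.min (tendsto_const_nhds (x := (n : ℝ)))
        simpa [hg, neg_mul] using h2
    have hfin : ∫ y, F n y ∂μ ≤ ∫ _z : H, min C (n : ℝ) ∂μ :=
      ge_of_tendsto hlim (Eventually.of_forall hle)
    calc ∫ y, F n y ∂μ ≤ ∫ _z : H, min C (n : ℝ) ∂μ := hfin
      _ = min C (n : ℝ) := by simp
      _ ≤ C := min_le_left _ _
  have hsup : ∀ y : H, ⨆ n : ℕ, ENNReal.ofReal (F n y) = ENNReal.ofReal (‖y‖ ^ 2) := by
    intro y
    apply le_antisymm
    · exact iSup_le fun n => ENNReal.ofReal_le_ofReal (min_le_left _ _)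
    · refine le_iSup_of_le ⌈‖y‖ ^ 2⌉₊ ?_
      simp only [hF]
      rw [min_eq_left (Nat.le_ceil _)]
  calc ∫⁻ y, ENNReal.ofReal (‖y‖ ^ 2) ∂μ
      = ∫⁻ y, ⨆ n : ℕ, ENNReal.ofReal (F n y) ∂μ := by simp_rw [hsup]
    _ = ⨆ n : ℕ, ∫⁻ y, ENNReal.ofReal (F n y) ∂μ :=
        lintegral_iSup (fun n => ENNReal.measurable_ofReal.comp (hFcont n).measurable)
          (fun i j hij y => ENNReal.ofReal_le_ofReal
            (min_le_min le_rfl (Nat.cast_le.2 hij)))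
    _ ≤ ENNReal.ofReal C := by
        refine iSup_le fun n => ?_
        rw [← ofReal_integral_eq_lintegral_ofReal (hFint n)
          (Eventually.of_forall (hFnonneg n))]
        exact ENNReal.ofReal_le_ofReal (key n)
end

section
/- Let H be a real Hilbert space, α > 0, and let E : [0, ∞) → (H →L H) be a family of continuous linear operators with ‖E_t h‖ ≤ e^{−α t} ‖h‖ for all t ≥ 0, h ∈ H. Let g : H → H be Lipschitz with constant L_g satisfying 0 < L_g < α. Suppose Y, Y′ : [0, ∞) → H are continuous and satisfy, for all t ≥ 0, Y(t) − Y′(t) = E_t (Y(0) − Y′(0)) + ∫₀ᵗ E_{t−s} (g(Y(s)) − g(Y′(s))) ds. Then for all t ≥ 0, ‖Y(t) − Y′(t)‖ ≤ e^{−(α − L_g) t} ‖Y(0) − Y′(0)‖. -/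
open MeasureTheory intervalIntegral

private theorem gronwall_int {u : ℝ → ℝ} {C K : ℝ} (hK : 0 < K) (hu : Continuous u)
    (hb : ∀ x, 0 ≤ x → u x ≤ C + K * ∫ s in (0:ℝ)..x, u s) :
    ∀ x, 0 ≤ x → u x ≤ C * Real.exp (K * x) := by
  intro t ht
  set F : ℝ → ℝ := fun x => ∫ s in (0:ℝ)..x, u s with hF
  have hFd : ∀ x : ℝ, HasDerivAt F (u x) x := fun x =>
    (hu.integral_hasStrictDerivAt 0 x).hasDerivAt
  have key : ∀ x ∈ Set.Icc (0:ℝ) t, F x ≤ gronwallBound 0 K C (x - 0) := by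
    apply le_gronwallBound_of_liminf_deriv_right_le
      (f' := u)
      (fun x _ => (hFd x).continuousAt.continuousWithinAt)
      (fun x _ r hr => ((hFd x).hasDerivWithinAt.liminf_right_slope_le hr))
    · simp [hF]
    · intro x hx
      have := hb x hx.1
      linarith
  have hFt : F t ≤ C / K * (Real.exp (K * t) - 1) := by
    have := key t ⟨ht, le_refl _⟩
    rw [sub_zero, gronwallBound_of_K_ne_0 hK.ne'] at this
    simpa using this
  calc u t ≤ C + K * F t := hb t ht
    _ ≤ C + K * (C / K * (Real.exp (K * t) - 1)) := by nlinarith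
    _ = C * Real.exp (K * t) := by field_simp; ring

/-- Pathwise exponential contraction for mild solutions of the fast
equation: if `E_t` decays like `e^{−αt}`, `g` is Lipschitz with constant `L_g < α`,
and `Y − Y′` satisfies the mild (variation-of-constants) equation, then
`‖Y(t) − Y′(t)‖ ≤ e^{−(α − L_g)t} ‖Y(0) − Y′(0)‖`. -/
theorem pathwise_exponential_contraction
    {H : Type*} [NormedAddCommGroup H] [InnerProductSpace ℝ H] [CompleteSpace H]
    (α : ℝ) (hα : 0 < α)
    (E : ℝ → H →L[ℝ] H)
    (hE : ∀ t, 0 ≤ t → ∀ h : H, ‖E t h‖ ≤ Real.exp (-α * t) * ‖h‖)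
    (g : H → H) (Lg : ℝ) (hLg : 0 < Lg) (hLgα : Lg < α)
    (hg : ∀ a b : H, ‖g a - g b‖ ≤ Lg * ‖a - b‖)
    (Y Y' : ℝ → H)
    (hY : ContinuousOn Y (Set.Ici 0)) (hY' : ContinuousOn Y' (Set.Ici 0))
    (heq : ∀ t, 0 ≤ t →
      Y t - Y' t = E t (Y 0 - Y' 0) + ∫ s in (0 : ℝ)..t, E (t - s) (g (Y s) - g (Y' s))) :
    ∀ t, 0 ≤ t → ‖Y t - Y' t‖ ≤ Real.exp (-(α - Lg) * t) * ‖Y 0 - Y' 0‖ := by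
  -- the difference, extended continuously to all of ℝ
  set D : ℝ → H := fun s => Y (max s 0) - Y' (max s 0) with hD
  have hmax : Continuous fun s : ℝ => max s 0 := continuous_id.max continuous_const
  have hmem : ∀ s : ℝ, max s 0 ∈ Set.Ici (0:ℝ) := fun s => Set.mem_Ici.mpr (le_max_right _ _)
  have hDc : Continuous D :=
    (hY.comp_continuous hmax hmem).sub (hY'.comp_continuous hmax hmem)
  have hDeq : ∀ s : ℝ, 0 ≤ s → D s = Y s - Y' s := by
    intro s hs; simp [hD, max_eq_left hs]
  set u : ℝ → ℝ := fun s => Real.exp (α * s) * ‖D s‖ with hu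
  have huc : Continuous u := (Real.continuous_exp.comp (continuous_const.mul continuous_id)).mul
    hDc.norm
  set C : ℝ := ‖Y 0 - Y' 0‖ with hC
  -- key integral inequality
  have key : ∀ x, 0 ≤ x → u x ≤ C + Lg * ∫ s in (0:ℝ)..x, u s := by
    intro x hx
    have hnorm : ‖Y x - Y' x‖ ≤ Real.exp (-α * x) * C
        + ∫ s in (0:ℝ)..x, Real.exp (-α * (x - s)) * (Lg * ‖D s‖) := by
      rw [heq x hx]
      refine (norm_add_le _ _).trans (add_le_add (hE x hx _) ?_)
      refine (intervalIntegral.norm_integral_le_integral_norm hx).trans ?_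
      rw [intervalIntegral.integral_of_le hx, intervalIntegral.integral_of_le hx]
      apply MeasureTheory.integral_mono_of_nonneg
      · exact Filter.Eventually.of_forall fun s => norm_nonneg _
      · apply Continuous.integrableOn_Ioc
        exact ((Real.continuous_exp.comp ((continuous_const.mul
          (continuous_const.sub continuous_id)))).mul (continuous_const.mul hDc.norm))
      · filter_upwards [MeasureTheory.ae_restrict_mem measurableSet_Ioc] with s hs
        have hs0 : (0:ℝ) ≤ s := hs.1.le
        have hxs : (0:ℝ) ≤ x - s := by linarith [hs.2]
        refine (hE (x - s) hxs _).trans ?_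
        rw [hDeq s hs0]
        exact mul_le_mul_of_nonneg_left (hg _ _) (Real.exp_nonneg _)
    have hint : Real.exp (α * x) * ∫ s in (0:ℝ)..x, Real.exp (-α * (x - s)) * (Lg * ‖D s‖)
        = Lg * ∫ s in (0:ℝ)..x, u s := by
      rw [← intervalIntegral.integral_const_mul, ← intervalIntegral.integral_const_mul]
      refine intervalIntegral.integral_congr fun s _ => ?_
      simp only [hu]
      rw [show Real.exp (α * x) * (Real.exp (-α * (x - s)) * (Lg * ‖D s‖))
          = (Real.exp (α * x) * Real.exp (-α * (x - s))) * (Lg * ‖D s‖) by ring,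
        ← Real.exp_add, show α * x + -α * (x - s) = α * s by ring]
      ring
    have hux : u x = Real.exp (α * x) * ‖Y x - Y' x‖ := by rw [hu]; simp [hDeq x hx]
    calc u x = Real.exp (α * x) * ‖Y x - Y' x‖ := hux
      _ ≤ Real.exp (α * x) * (Real.exp (-α * x) * C
          + ∫ s in (0:ℝ)..x, Real.exp (-α * (x - s)) * (Lg * ‖D s‖)) :=
        mul_le_mul_of_nonneg_left hnorm (Real.exp_nonneg _)
      _ = Real.exp (α * x) * Real.exp (-α * x) * C
          + Real.exp (α * x) * ∫ s in (0:ℝ)..x, Real.exp (-α * (x - s)) * (Lg * ‖D s‖) := by ring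
      _ = C + Lg * ∫ s in (0:ℝ)..x, u s := by
          rw [← Real.exp_add, hint]; simp
  intro t ht
  have := gronwall_int hLg huc key t ht
  have h1 : ‖Y t - Y' t‖ = Real.exp (-α * t) * u t := by
    rw [hu]; simp [hDeq t ht, ← mul_assoc, ← Real.exp_add]
  rw [h1]
  calc Real.exp (-α * t) * u t ≤ Real.exp (-α * t) * (C * Real.exp (Lg * t)) :=
      mul_le_mul_of_nonneg_left this (Real.exp_nonneg _)
    _ = Real.exp (-(α - Lg) * t) * C := by
        rw [show Real.exp (-α*t) * (C * Real.exp (Lg*t)) = (Real.exp (-α*t) * Real.exp (Lg*t)) * C by ring,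
          ← Real.exp_add, show -α*t + Lg*t = -(α-Lg)*t by ring]
end
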